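/- Value difference under soft policy updates in induced MDPs: Let M be an episodic MDP with horizon H, finite action set A with |A| = K, and fixed initial state x₁. Let {Q^t}_{t∈[T]} be an arbitrary sequence of value functions with max_{h,t} ‖Q_h^t‖_∞ ≤ b, and define the policies π^1_h(·|s) uniform on A, and π_h^{t+1}(a|s) ∝ π_h^t(a|s)·exp(η Q_h^t(s,a)) for all (s,a,h,t). If η = √(ln K/(4(e−2) b² T)) and T ≥ ln K/(e−2), then for any policy π: Σ_{t=1}^T ( V^π_{1,M(π^t,Q^t)}(x₁) − V^{π^t}_{1,M(π^t,Q^t)}(x₁) ) ≤ 4 H b √(T log K). -/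

import Mathlib

/-!
In the induced MDP `M(π^t, Q^t)` the rewards telescope along `π^t`, so that
`V^{π^t}_1(x₁) = ⟨π^t_1(x₁), Q^t_1(x₁)⟩`. For any other policy `π` the same telescoping
(the performance-difference identity) gives
`V^π_1(x₁) - V^{π^t}_1(x₁) = E_π [∑_h ⟨π_h - π^t_h, Q^t_h⟩(x_h)]`. Summing over `t` and
exchanging with the expectation over the trajectory of `π`, it suffices to bound, at every step
`h` and state `x`, the regret `∑_t ⟨π_h(x) - π^t_h(x), Q^t_h(x)⟩` of the Hedge updates, which is
at most `log K / η + η b² T ≤ 4 b √(T log K)` for the given `η`.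
-/

/-- Expectation of `f` under a (discrete) probability mass function `p`. -/
noncomputable def pmfExp {α : Type*} (p : PMF α) (f : α → ℝ) : ℝ :=
  ∑' a, (p a).toReal * f a

/-- `π : ℕ → X → A → ℝ` is a (nonstationary, stochastic) policy. -/
def IsPolicySeq {X A : Type*} [Fintype A] (π : ℕ → X → A → ℝ) : Prop :=
  ∀ h x, (∀ a, 0 ≤ π h x a) ∧ (∑ a, π h x a) = 1

/-- `k`-step-to-go state value function of `π` at step `h`. -/
noncomputable def Vsteps {X A : Type*} [Fintype A] (P : ℕ → X → A → PMF X)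
    (r : ℕ → X → A → ℝ) (π : ℕ → X → A → ℝ) : ℕ → ℕ → X → ℝ
  | 0, _, _ => 0
  | k + 1, h, x =>
      ∑ a, π h x a * (r h x a + pmfExp (P h x a) (Vsteps P r π k (h + 1)))

/-- State value function `V_h^π` in the horizon-`H` episodic MDP `(P, r)`. -/
noncomputable def Vh {X A : Type*} [Fintype A] (H : ℕ) (P : ℕ → X → A → PMF X)
    (r : ℕ → X → A → ℝ) (π : ℕ → X → A → ℝ) (h : ℕ) (x : X) : ℝ :=
  Vsteps P r π (H - h) h x

/-- The Bellman operator `[T_h^π f](x,a) = r_h(x,a) + E_{x'∼P_h(·|x,a)}[f(x', π_{h+1})]`. -/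
noncomputable def bellmanOp {X A : Type*} [Fintype A] (P : ℕ → X → A → PMF X)
    (r : ℕ → X → A → ℝ) (π : ℕ → X → A → ℝ) (h : ℕ) (f : X → A → ℝ)
    (x : X) (a : A) : ℝ :=
  r h x a + pmfExp (P h x a) fun x' => ∑ a', π (h + 1) x' a' * f x' a'

/-- Mean reward of the induced MDP `M(Q, π)`:
`r_h^{π,Q}(x,a) = r_h(x,a) - ([T_h^π Q_{h+1}](x,a) - Q_h(x,a))`. -/
noncomputable def inducedReward {X A : Type*} [Fintype A] (P : ℕ → X → A → PMF X)
    (r : ℕ → X → A → ℝ) (π : ℕ → X → A → ℝ) (Q : ℕ → X → A → ℝ)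
    (h : ℕ) (x : X) (a : A) : ℝ :=
  r h x a - (bellmanOp P r π h (Q (h + 1)) x a - Q h x a)

open Finset

section pmfExp

variable {α : Type*} (p : PMF α)

lemma PMF.summable_toReal_mul_of_abs_le {f : α → ℝ} {C : ℝ} (hf : ∀ a, |f a| ≤ C) :
    Summable fun a => (p a).toReal * f a := by
  have hp : Summable fun a => (p a).toReal :=
    ENNReal.summable_toReal (p.tsum_coe ▸ ENNReal.one_ne_top)
  refine .of_norm_bounded (hp.mul_right C) fun a => ?_
  rw [Real.norm_eq_abs, abs_mul, ENNReal.abs_toReal]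
  exact mul_le_mul_of_nonneg_left (hf a) ENNReal.toReal_nonneg

lemma pmfExp_const (c : ℝ) : pmfExp p (fun _ => c) = c := by
  rw [pmfExp, tsum_mul_right, ← ENNReal.tsum_toReal_eq p.apply_ne_top, p.tsum_coe,
    ENNReal.toReal_one, one_mul]

lemma pmfExp_mono {f g : α → ℝ} {C C' : ℝ} (hf : ∀ a, |f a| ≤ C) (hg : ∀ a, |g a| ≤ C')
    (hfg : ∀ a, f a ≤ g a) : pmfExp p f ≤ pmfExp p g :=
  Summable.tsum_le_tsum (fun a => mul_le_mul_of_nonneg_left (hfg a) ENNReal.toReal_nonneg)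
    (p.summable_toReal_mul_of_abs_le hf) (p.summable_toReal_mul_of_abs_le hg)

lemma abs_pmfExp_le {f : α → ℝ} {C : ℝ} (hf : ∀ a, |f a| ≤ C) : |pmfExp p f| ≤ C := by
  have hC : ∀ c : ℝ, ∀ _ : α, |c| ≤ |c| := fun _ _ => le_rfl
  refine abs_le.2 ⟨?_, ?_⟩
  · simpa only [pmfExp_const] using
      pmfExp_mono p (hC (-C)) hf fun a => neg_le_of_abs_le (hf a)
  · simpa only [pmfExp_const] using
      pmfExp_mono p hf (hC C) fun a => le_of_abs_le (hf a)

lemma pmfExp_sub {f g : α → ℝ} {C C' : ℝ} (hf : ∀ a, |f a| ≤ C) (hg : ∀ a, |g a| ≤ C') :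
    pmfExp p (fun a => f a - g a) = pmfExp p f - pmfExp p g := by
  simp only [pmfExp, mul_sub]
  exact (p.summable_toReal_mul_of_abs_le hf).tsum_sub (p.summable_toReal_mul_of_abs_le hg)

lemma pmfExp_sum {ι : Type*} {s : Finset ι} {f : ι → α → ℝ} {C : ℝ}
    (hf : ∀ i ∈ s, ∀ a, |f i a| ≤ C) :
    pmfExp p (fun a => ∑ i ∈ s, f i a) = ∑ i ∈ s, pmfExp p (f i) := by
  simp only [pmfExp, mul_sum]
  exact Summable.tsum_finsetSum fun i hi => p.summable_toReal_mul_of_abs_le (hf i hi)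

end pmfExp

lemma sum_mul_le_of_mem_stdSimplex {A : Type*} [Fintype A] {w f : A → ℝ} {c : ℝ}
    (hw : w ∈ stdSimplex ℝ A) (hf : ∀ a, f a ≤ c) : ∑ a, w a * f a ≤ c :=
  calc ∑ a, w a * f a ≤ ∑ a, w a * c :=
        sum_le_sum fun a _ => mul_le_mul_of_nonneg_left (hf a) (hw.1 a)
    _ = c := by rw [← sum_mul, hw.2, one_mul]

lemma abs_sum_mul_le_of_mem_stdSimplex {A : Type*} [Fintype A] {w f : A → ℝ} {b : ℝ}
    (hw : w ∈ stdSimplex ℝ A) (hf : ∀ a, |f a| ≤ b) : |∑ a, w a * f a| ≤ b :=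
  calc |∑ a, w a * f a| ≤ ∑ a, w a * |f a| := by
        simpa only [abs_mul, abs_of_nonneg (hw.1 _)] using
          abs_sum_le_sum_abs (fun a => w a * f a) univ
    _ ≤ b := sum_mul_le_of_mem_stdSimplex hw hf

section InducedMDP

variable {X A : Type*} [Fintype A] (P : ℕ → X → A → PMF X) (r : ℕ → X → A → ℝ)
  {π : ℕ → X → A → ℝ} {b : ℝ}

lemma abs_Vsteps_le {r' : ℕ → X → A → ℝ} (hπ : IsPolicySeq π) {c : ℝ}
    (hr' : ∀ h x a, |r' h x a| ≤ c) (k h : ℕ) (x : X) : |Vsteps P r' π k h x| ≤ k * c := by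
  induction k generalizing h x with
  | zero => simp [Vsteps]
  | succ k ih =>
    have hstep a : |r' h x a + pmfExp (P h x a) (Vsteps P r' π k (h + 1))| ≤ k * c + c :=
      (abs_add_le _ _).trans <| (add_comm (k * c) c).symm ▸
        add_le_add (hr' h x a) (abs_pmfExp_le _ fun x' => ih (h + 1) x')
    rw [Vsteps, Nat.cast_succ, add_one_mul]
    exact abs_sum_mul_le_of_mem_stdSimplex (hπ h x) hstep

lemma inducedReward_eq (ρ Q : ℕ → X → A → ℝ) (h : ℕ) (x : X) (a : A) :
    inducedReward P r ρ Q h x a =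
      Q h x a - pmfExp (P h x a) fun x' => ∑ a', ρ (h + 1) x' a' * Q (h + 1) x' a' := by
  rw [inducedReward, bellmanOp]
  ring

lemma abs_inducedReward_le {ρ Q : ℕ → X → A → ℝ} (hρ : IsPolicySeq ρ)
    (hQ : ∀ h x a, |Q h x a| ≤ b) (h : ℕ) (x : X) (a : A) :
    |inducedReward P r ρ Q h x a| ≤ 2 * b := by
  rw [inducedReward_eq, two_mul]
  exact (abs_sub _ _).trans <| add_le_add (hQ h x a) <| abs_pmfExp_le _ fun x' =>
    abs_sum_mul_le_of_mem_stdSimplex (hρ (h + 1) x') (hQ (h + 1) x')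

/-- In `M(ρ, Q)` the rewards telescope along `ρ`. -/
lemma Vsteps_inducedReward_self {ρ Q : ℕ → X → A → ℝ} {H : ℕ}
    (hQH : ∀ x a, Q H x a = 0) {k h : ℕ} (hk : h + k = H) (x : X) :
    Vsteps P (inducedReward P r ρ Q) ρ k h x = ∑ a, ρ h x a * Q h x a := by
  induction k generalizing h x with
  | zero =>
    rw [add_zero] at hk
    simp [Vsteps, hk, hQH]
  | succ k ih =>
    have hnext : Vsteps P (inducedReward P r ρ Q) ρ k (h + 1) =
        fun x' => ∑ a', ρ (h + 1) x' a' * Q (h + 1) x' a' :=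
      funext (ih (by omega))
    simp only [Vsteps, hnext, inducedReward_eq, sub_add_cancel]

lemma Vsteps_inducedReward_succ {ρ Q : ℕ → X → A → ℝ} (hπ : IsPolicySeq π)
    (hρ : IsPolicySeq ρ) (hQ : ∀ h x a, |Q h x a| ≤ b) (k h : ℕ) (x : X) :
    Vsteps P (inducedReward P r ρ Q) π (k + 1) h x =
      ∑ a, π h x a * (Q h x a + pmfExp (P h x a) fun x' =>
        Vsteps P (inducedReward P r ρ Q) π k (h + 1) x'
          - ∑ a', ρ (h + 1) x' a' * Q (h + 1) x' a') := by
  refine sum_congr rfl fun a _ => ?_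
  rw [pmfExp_sub _ (abs_Vsteps_le P hπ (abs_inducedReward_le P r hρ hQ) k (h + 1))
    fun x' => abs_sum_mul_le_of_mem_stdSimplex (hρ (h + 1) x') (hQ (h + 1) x'),
    inducedReward_eq]
  ring

lemma sum_Vsteps_inducedReward_sub_le {T H : ℕ} {ρ Q : ℕ → ℕ → X → A → ℝ} {R : ℝ}
    (hπ : IsPolicySeq π) (hρ : ∀ t, IsPolicySeq (ρ t))
    (hQ : ∀ t h x a, |Q t h x a| ≤ b) (hQH : ∀ t x a, Q t H x a = 0)
    (hregret : ∀ h x, ∑ t ∈ range T, ∑ a, (π h x a - ρ t h x a) * Q t h x a ≤ R)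
    {k h : ℕ} (hk : h + k = H) (x : X) :
    ∑ t ∈ range T, (Vsteps P (inducedReward P r (ρ t) (Q t)) π k h x
      - ∑ a, ρ t h x a * Q t h x a) ≤ k * R := by
  induction k generalizing h x with
  | zero =>
    rw [add_zero] at hk
    simp [Vsteps, hk, hQH]
  | succ k ih =>
    set G : ℕ → X → ℝ := fun t x' =>
      Vsteps P (inducedReward P r (ρ t) (Q t)) π k (h + 1) x'
        - ∑ a', ρ t (h + 1) x' a' * Q t (h + 1) x' a'
    have hGb t x' : |G t x'| ≤ k * (2 * b) + b :=
      (abs_sub _ _).trans <| add_le_add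
        (abs_Vsteps_le P hπ (abs_inducedReward_le P r (hρ t) (hQ t)) k (h + 1) x')
        (abs_sum_mul_le_of_mem_stdSimplex (hρ t (h + 1) x') (hQ t (h + 1) x'))
    have hstep t : Vsteps P (inducedReward P r (ρ t) (Q t)) π (k + 1) h x
        - ∑ a, ρ t h x a * Q t h x a =
        ∑ a, (π h x a - ρ t h x a) * Q t h x a + ∑ a, π h x a * pmfExp (P h x a) (G t) := by
      rw [Vsteps_inducedReward_succ P r hπ (hρ t) (hQ t)]
      simp only [mul_add, sub_mul, sum_add_distrib, sum_sub_distrib, G]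
      ring
    have hswap : ∑ t ∈ range T, ∑ a, π h x a * pmfExp (P h x a) (G t) =
        ∑ a, π h x a * pmfExp (P h x a) fun x' => ∑ t ∈ range T, G t x' := by
      simp only [pmfExp_sum _ fun t _ => hGb t, mul_sum]
      exact sum_comm
    have hnext :
        ∑ a, π h x a * (pmfExp (P h x a) fun x' => ∑ t ∈ range T, G t x') ≤ k * R :=
      sum_mul_le_of_mem_stdSimplex (hπ h x) fun a => by
        simpa only [pmfExp_const] using pmfExp_mono (P h x a)
          (fun x' => (abs_sum_le_sum_abs _ _).trans (sum_le_sum fun t _ => hGb t x'))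
          (fun _ => le_rfl) fun x' => ih (by omega) x'
    rw [sum_congr rfl fun t _ => hstep t, sum_add_distrib, hswap, Nat.cast_succ, add_one_mul,
      add_comm _ R]
    exact add_le_add (hregret h x) hnext

end InducedMDP

section Hedge

variable {A : Type*} [Fintype A]

lemma sum_mul_exp_pos {w : A → ℝ} (hw : w ∈ stdSimplex ℝ A) (c : A → ℝ) :
    0 < ∑ a, w a * Real.exp (c a) := by
  obtain ⟨a, -, ha⟩ := exists_lt_of_sum_lt (s := univ) (f := fun _ => (0 : ℝ)) (g := w)
    (by simp [hw.2])
  exact sum_pos' (fun a _ => mul_nonneg (hw.1 a) (Real.exp_pos _).le)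
    ⟨a, mem_univ a, mul_pos ha (Real.exp_pos _)⟩

lemma log_sum_mul_exp_le {w x : A → ℝ} (hw : w ∈ stdSimplex ℝ A) (hx : ∀ a, |x a| ≤ 1) :
    Real.log (∑ a, w a * Real.exp (x a)) ≤ ∑ a, w a * x a + ∑ a, w a * x a ^ 2 := by
  have hexp : ∀ a, Real.exp (x a) ≤ 1 + x a + x a ^ 2 := fun a => by
    linarith [(abs_le.1 (Real.abs_exp_sub_one_sub_id_le (hx a))).2]
  have hsum : ∑ a, w a * Real.exp (x a) ≤ 1 + (∑ a, w a * x a + ∑ a, w a * x a ^ 2) :=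
    calc ∑ a, w a * Real.exp (x a) ≤ ∑ a, w a * (1 + x a + x a ^ 2) :=
          sum_le_sum fun a _ => mul_le_mul_of_nonneg_left (hexp a) (hw.1 a)
      _ = 1 + (∑ a, w a * x a + ∑ a, w a * x a ^ 2) := by
          simp only [mul_add, mul_one, sum_add_distrib, hw.2]
          ring
  linarith [Real.log_le_sub_one_of_pos (sum_mul_exp_pos hw x)]

lemma mem_stdSimplex_of_eq_uniform [Nonempty A] {w : A → ℝ}
    (hw : ∀ a, w a = 1 / (Fintype.card A : ℝ)) : w ∈ stdSimplex ℝ A :=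
  (funext hw : w = _) ▸ ⟨fun _ => by positivity, by simp⟩

variable {η : ℝ} {q w : ℕ → A → ℝ}

lemma hedge_mem_stdSimplex (hw0 : w 0 ∈ stdSimplex ℝ A)
    (hw : ∀ t a, w (t + 1) a =
      w t a * Real.exp (η * q t a) / ∑ a', w t a' * Real.exp (η * q t a')) (t : ℕ) :
    w t ∈ stdSimplex ℝ A := by
  induction t with
  | zero => exact hw0
  | succ t ih =>
    have hZ := sum_mul_exp_pos ih fun a => η * q t a
    rw [show w (t + 1) = _ from funext (hw t)]
    exact ⟨fun a => div_nonneg (mul_nonneg (ih.1 a) (Real.exp_pos _).le) hZ.le,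
      by rw [← sum_div, div_self hZ.ne']⟩

lemma hedge_mul_prod_eq (hw0 : w 0 ∈ stdSimplex ℝ A)
    (hw : ∀ t a, w (t + 1) a =
      w t a * Real.exp (η * q t a) / ∑ a', w t a' * Real.exp (η * q t a')) (t : ℕ) (a : A) :
    w t a * ∏ s ∈ range t, ∑ a', w s a' * Real.exp (η * q s a') =
      w 0 a * Real.exp (η * ∑ s ∈ range t, q s a) := by
  induction t with
  | zero => simp
  | succ t ih =>
    have hZ := (sum_mul_exp_pos (hedge_mem_stdSimplex hw0 hw t) fun a => η * q t a).ne'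
    rw [prod_range_succ, sum_range_succ, hw, mul_add, Real.exp_add, ← mul_assoc (w 0 a), ← ih]
    field_simp

/-- The potential `Φ t = log ∑ₐ exp (η ∑_{s<t} q s a)` starts at `log K`, grows by
`log ∑ₐ w t a exp (η q t a) ≤ η ⟨w t, q t⟩ + η² b²` per round, and ends above
`η ∑_{s<T} q s a` for every action `a`. -/
lemma hedge_regret_le [Nonempty A] (hw0 : ∀ a, w 0 a = 1 / (Fintype.card A : ℝ))
    (hw : ∀ t a, w (t + 1) a =
      w t a * Real.exp (η * q t a) / ∑ a', w t a' * Real.exp (η * q t a'))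
    {p : A → ℝ} (hp : p ∈ stdSimplex ℝ A) {b : ℝ} (hq : ∀ t a, |q t a| ≤ b)
    (hη : 0 ≤ η) (hηb : η * b ≤ 1) (T : ℕ) :
    η * ∑ t ∈ range T, ∑ a, (p a - w t a) * q t a ≤
      Real.log (Fintype.card A) + η ^ 2 * b ^ 2 * T := by
  have hw0' : w 0 ∈ stdSimplex ℝ A := mem_stdSimplex_of_eq_uniform hw0
  have hwT := hedge_mem_stdSimplex hw0' hw
  set Z : ℕ → ℝ := fun s => ∑ a', w s a' * Real.exp (η * q s a')
  have hZ s : 0 < Z s := sum_mul_exp_pos (hwT s) _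
  have hlogZ s : Real.log (Z s) ≤ η * ∑ a, w s a * q s a + η ^ 2 * b ^ 2 := by
    have hηq a : |η * q s a| ≤ η * b := by
      rw [abs_mul, abs_of_nonneg hη]
      exact mul_le_mul_of_nonneg_left (hq s a) hη
    have hsq : ∑ a, w s a * (η * q s a) ^ 2 ≤ η ^ 2 * b ^ 2 :=
      sum_mul_le_of_mem_stdSimplex (hwT s) fun a => by
        rw [← mul_pow]
        exact sq_le_sq' (neg_le_of_abs_le (hηq a)) (le_of_abs_le (hηq a))
    have := log_sum_mul_exp_le (hwT s) fun a => (hηq a).trans hηb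
    simp only [mul_left_comm _ η, ← mul_sum] at this
    linarith
  have hbest a : η * ∑ s ∈ range T, q s a ≤
      Real.log (Fintype.card A) + ∑ s ∈ range T, Real.log (Z s) := by
    have hle : 1 / (Fintype.card A : ℝ) * Real.exp (η * ∑ s ∈ range T, q s a) ≤
        ∏ s ∈ range T, Z s := by
      rw [← hw0 a, ← hedge_mul_prod_eq hw0' hw]
      exact mul_le_of_le_one_left (prod_pos fun s _ => hZ s).le
        (mem_Icc_of_mem_stdSimplex (hwT T) a).2
    have := Real.log_le_log (by positivity) hle
    rw [Real.log_mul (by positivity) (Real.exp_pos _).ne', Real.log_exp, one_div, Real.log_inv,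
      Real.log_prod fun s _ => (hZ s).ne'] at this
    linarith
  calc η * ∑ t ∈ range T, ∑ a, (p a - w t a) * q t a
      = ∑ a, p a * (η * ∑ t ∈ range T, q t a)
          - ∑ t ∈ range T, η * ∑ a, w t a * q t a := by
        simp only [sub_mul, sum_sub_distrib, mul_sub, mul_sum]
        rw [sum_comm]
        ring_nf
    _ ≤ (Real.log (Fintype.card A) + ∑ s ∈ range T, Real.log (Z s))
          - ∑ t ∈ range T, η * ∑ a, w t a * q t a :=
        sub_le_sub_right (sum_mul_le_of_mem_stdSimplex hp hbest) _
    _ ≤ Real.log (Fintype.card A) + η ^ 2 * b ^ 2 * T := by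
        have := sum_le_sum fun s (_ : s ∈ range T) => hlogZ s
        rw [sum_add_distrib, sum_const, card_range, nsmul_eq_mul] at this
        linarith

end Hedge

section Tuning

variable {L c b η T : ℝ}

lemma mul_le_one_of_eq_sqrt (hL : 0 ≤ L) (hc : 0 < c) (hT : L / c ≤ T)
    (hη : η = √(L / (4 * c * b ^ 2 * T))) : η * b ≤ 1 := by
  have hT0 : 0 ≤ T := (div_nonneg hL hc.le).trans hT
  have hLT : L ≤ c * T := by rwa [div_le_iff₀' hc] at hT
  have hsq : (η * b) ^ 2 ≤ 1 := by
    rw [mul_pow, hη, Real.sq_sqrt (by positivity), div_mul_eq_mul_div]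
    exact div_le_one_of_le₀ (by nlinarith [sq_nonneg b]) (by positivity)
  nlinarith

lemma le_of_mul_le_of_eq_sqrt {X : ℝ} (hL : 0 < L) (hc : 1 / 4 ≤ c) (hc1 : c ≤ 1)
    (hb : 0 < b) (hT : 0 < T) (hη : η = √(L / (4 * c * b ^ 2 * T)))
    (hX : η * X ≤ L + η ^ 2 * b ^ 2 * T) :
    X ≤ 4 * b * √(T * L) := by
  have hηpos : 0 < η := hη ▸ Real.sqrt_pos.2 (by positivity)
  have hη2 : η ^ 2 * b ^ 2 * T = L / (4 * c) := by
    rw [hη, Real.sq_sqrt (by positivity)]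
    field_simp
  have hy : L / 2 ≤ b * η * √(T * L) := by
    have hy2 : (b * η * √(T * L)) ^ 2 = L * (L / (4 * c)) := by
      rw [mul_pow, Real.sq_sqrt (by positivity), ← hη2]
      ring
    have hc4 : L / 4 ≤ L / (4 * c) := div_le_div_of_nonneg_left hL.le (by linarith) (by linarith)
    refine (pow_le_pow_iff_left₀ (by positivity) (by positivity) two_ne_zero).1 ?_
    rw [hy2]
    nlinarith
  have hLc : L / (4 * c) ≤ L := div_le_self hL.le (by linarith)
  refine le_of_mul_le_mul_left ?_ hηpos
  nlinarith

end Tuning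

lemma hedge_regret_le_of_eq_sqrt {A : Type*} [Fintype A] [Nonempty A] {η b : ℝ} {T : ℕ}
    {q w : ℕ → A → ℝ} (hw0 : ∀ a, w 0 a = 1 / (Fintype.card A : ℝ))
    (hw : ∀ t a, w (t + 1) a =
      w t a * Real.exp (η * q t a) / ∑ a', w t a' * Real.exp (η * q t a'))
    {p : A → ℝ} (hp : p ∈ stdSimplex ℝ A) (hb : 0 < b) (hq : ∀ t a, |q t a| ≤ b)
    (hη : η = √(Real.log (Fintype.card A) / (4 * (Real.exp 1 - 2) * b ^ 2 * T)))
    (hT : (T : ℝ) ≥ Real.log (Fintype.card A) / (Real.exp 1 - 2)) :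
    ∑ t ∈ range T, ∑ a, (p a - w t a) * q t a ≤
      4 * b * √(T * Real.log (Fintype.card A)) := by
  rcases (Nat.one_le_iff_ne_zero.2 (Fintype.card_ne_zero (α := A))).eq_or_lt with hA | hA
  · have : Subsingleton A := Fintype.card_le_one_iff_subsingleton.1 hA.ge
    have hw0' : w 0 ∈ stdSimplex ℝ A := mem_stdSimplex_of_eq_uniform hw0
    have hpw t : p = w t := by
      have hwt := hedge_mem_stdSimplex hw0' hw t
      rw [stdSimplex_unique, Set.mem_singleton_iff] at hp hwt
      rw [hp, hwt]
    rw [sum_eq_zero fun t _ => sum_eq_zero fun a _ => by rw [hpw t, sub_self, zero_mul]]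
    positivity
  · have hL : 0 < Real.log (Fintype.card A) := Real.log_pos (by exact_mod_cast hA)
    have hc : 1 / 4 ≤ Real.exp 1 - 2 := by linarith [Real.exp_one_gt_d9]
    have hc1 : Real.exp 1 - 2 ≤ 1 := by linarith [Real.exp_one_lt_three]
    have hT0 : (0 : ℝ) < T := lt_of_lt_of_le (by positivity) hT
    have hηb := mul_le_one_of_eq_sqrt hL.le (by linarith) hT hη
    exact le_of_mul_le_of_eq_sqrt hL hc hc1 hb hT0 hη <|
      hedge_regret_le hw0 hw hp hq (hη ▸ Real.sqrt_nonneg _) hηb T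

/-- Value difference under soft (Hedge) policy updates in the induced MDPs:
if `π^1` is uniform, `π^{t+1}_h(a|s) ∝ π^t_h(a|s) exp(η Q_h^t(s,a))`,
`η = √(ln K/(4(e-2) b² T))` and `T ≥ ln K/(e-2)`, then for any comparator
policy `π`, `Σ_{t<T} (V^π_{1,M(π^t,Q^t)}(x₁) - V^{π^t}_{1,M(π^t,Q^t)}(x₁))
≤ 4 H b √(T log K)`. -/
theorem value_difference_soft_policy_updates {X A : Type*} [Fintype A]
    (K : ℕ) (hK : K = Fintype.card A) (hK1 : 1 ≤ K)
    (H : ℕ) (P : ℕ → X → A → PMF X) (r : ℕ → X → A → ℝ) (x1 : X)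
    (b : ℝ) (hb : 0 < b) (T : ℕ)
    (Qt : ℕ → ℕ → X → A → ℝ)
    (hQb : ∀ t h x a, |Qt t h x a| ≤ b)
    (hQH : ∀ t x a, Qt t H x a = 0)
    (η : ℝ) (hη : η = Real.sqrt (Real.log K / (4 * (Real.exp 1 - 2) * b ^ 2 * T)))
    (hT : (T : ℝ) ≥ Real.log K / (Real.exp 1 - 2))
    (πs : ℕ → ℕ → X → A → ℝ)
    (hπ0 : ∀ h x a, πs 0 h x a = 1 / (K : ℝ))
    (hπs : ∀ t h x a, πs (t + 1) h x a =
      πs t h x a * Real.exp (η * Qt t h x a) /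
        ∑ a', πs t h x a' * Real.exp (η * Qt t h x a'))
    (π : ℕ → X → A → ℝ) (hπ : IsPolicySeq π) :
    ∑ t ∈ Finset.range T,
        (Vh H P (inducedReward P r (πs t) (Qt t)) π 0 x1
          - Vh H P (inducedReward P r (πs t) (Qt t)) (πs t) 0 x1) ≤
      4 * H * b * Real.sqrt (T * Real.log K) := by
  subst hK
  have : Nonempty A := Fintype.card_pos_iff.1 hK1
  have hπs_policy t : IsPolicySeq (πs t) := fun h x =>
    hedge_mem_stdSimplex (w := (πs · h x)) (mem_stdSimplex_of_eq_uniform (hπ0 h x))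
      (fun t a => hπs t h x a) t
  have hregret h x :
      ∑ t ∈ range T, ∑ a, (π h x a - πs t h x a) * Qt t h x a ≤
        4 * b * √(T * Real.log (Fintype.card A)) :=
    hedge_regret_le_of_eq_sqrt (hπ0 h x) (hπs · h x) (hπ h x) hb (hQb · h x) hη hT
  have hgap := sum_Vsteps_inducedReward_sub_le P r hπ hπs_policy hQb hQH hregret (zero_add H) x1
  simp only [Vh, Nat.sub_zero, Vsteps_inducedReward_self P r (hQH _) (zero_add H)]
  exact hgap.trans_eq (by ring)
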